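/- arXiv:2110.01234 — 2 statements merged into one kernel-verified Lean document; each statement's English description precedes it below -/
import Mathlib

section
/- For every X ∈ [0,∞)² \ {(0,0)} and n ≥ 2, the Hessian matrix D²Φ_n(X) is symmetric positive definite: for every nonzero ξ ∈ ℝ², ⟨D²Φ_n(X) ξ, ξ⟩ > 0. -/
open Matrix Finset

/-- `α_{k,n} = R (k + μ (n - k - 1))`. -/
noncomputable def alph (R mu : ℝ) (n k : ℕ) : ℝ := R * ((k : ℝ) + mu * ((n : ℝ) - (k : ℝ) - 1))

/-- `a_{j,n}`. -/
noncomputable def coefa (R mu : ℝ) (n j : ℕ) : ℝ :=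
  (n.choose j : ℝ) * ∏ k ∈ Finset.range j, ((k : ℝ) + alph R mu n k) / alph R mu n k

/-- `Φ_n(X) = Σ_{j=0}^n a_{j,n} X₁^j X₂^{n-j}`. -/
noncomputable def Phi (R mu : ℝ) (n : ℕ) (X : ℝ × ℝ) : ℝ :=
  ∑ j ∈ Finset.range (n + 1), coefa R mu n j * X.1 ^ j * X.2 ^ (n - j)

/-- first partial derivative of `Φ_n` in the first variable. -/
noncomputable def d1Phi (R mu : ℝ) (n : ℕ) (X : ℝ × ℝ) : ℝ :=
  deriv (fun t => Phi R mu n (t, X.2)) X.1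

/-- first partial derivative of `Φ_n` in the second variable. -/
noncomputable def d2Phi (R mu : ℝ) (n : ℕ) (X : ℝ × ℝ) : ℝ :=
  deriv (fun t => Phi R mu n (X.1, t)) X.2

/-- `∂₁²Φ_n`. -/
noncomputable def d11Phi (R mu : ℝ) (n : ℕ) (X : ℝ × ℝ) : ℝ :=
  deriv (fun t => d1Phi R mu n (t, X.2)) X.1

/-- `∂₁∂₂Φ_n`. -/
noncomputable def d12Phi (R mu : ℝ) (n : ℕ) (X : ℝ × ℝ) : ℝ :=
  deriv (fun t => d2Phi R mu n (t, X.2)) X.1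

/-- `∂₂²Φ_n`. -/
noncomputable def d22Phi (R mu : ℝ) (n : ℕ) (X : ℝ × ℝ) : ℝ :=
  deriv (fun t => d2Phi R mu n (X.1, t)) X.2

/-- The Hessian matrix `D²Φ_n(X)`. -/
noncomputable def hessPhi (R mu : ℝ) (n : ℕ) (X : ℝ × ℝ) : Matrix (Fin 2) (Fin 2) ℝ :=
  !![d11Phi R mu n X, d12Phi R mu n X; d12Phi R mu n X, d22Phi R mu n X]

/-- The mobility matrix `M(X)`. -/
noncomputable def mobM (R mu : ℝ) (X : ℝ × ℝ) : Matrix (Fin 2) (Fin 2) ℝ :=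
  !![(1 + R) * X.1, R * X.1; mu * R * X.2, mu * R * X.2]

/-- The quantity `A_{j,k}`. -/
noncomputable def Acoef (R mu : ℝ) (n j k : ℕ) : ℝ :=
  ((j : ℝ) + 2) * ((n : ℝ) - (k : ℝ)) * coefa R mu n (j + 2) * coefa R mu n k
    - ((n : ℝ) - (j : ℝ) - 1) * ((k : ℝ) + 1) * coefa R mu n (j + 1) * coefa R mu n (k + 1)

/-- `ν_n`. -/
noncomputable def nuc (R mu : ℝ) (n : ℕ) : ℝ :=
  Real.exp (((n : ℝ) - 1) * ((1 + R * max 1 mu) * Real.log (1 + 1 / (R * max 1 mu)) - 1)) - 1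

noncomputable def bb (R mu : ℝ) (n j : ℕ) : ℝ :=
  ∏ k ∈ Finset.range j, ((k : ℝ) + alph R mu n k) / alph R mu n k

lemma coefa_eq (R mu : ℝ) (n j : ℕ) : coefa R mu n j = (n.choose j : ℝ) * bb R mu n j := rfl

lemma alph_pos {R mu : ℝ} (hR : 0 < R) (hmu : 0 < mu) {n k : ℕ} (hn : 2 ≤ n) (hk : k + 1 ≤ n) :
    0 < alph R mu n k := by
  unfold alph
  have h : (k:ℝ) + 1 ≤ (n:ℝ) := by exact_mod_cast hk
  have hn' : (2:ℝ) ≤ (n:ℝ) := by exact_mod_cast hn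
  rcases Nat.eq_zero_or_pos k with hk0 | hk0
  · subst hk0
    have h2 : (0:ℝ) < mu * ((n:ℝ) - (0:ℕ) - 1) := by
      apply mul_pos hmu; push_cast at h hn' ⊢; linarith
    push_cast at h2 ⊢
    nlinarith
  · have h1 : (1:ℝ) ≤ (k:ℝ) := by exact_mod_cast hk0
    have h2 : (0:ℝ) ≤ mu * ((n:ℝ) - (k:ℝ) - 1) := by
      apply mul_nonneg hmu.le; linarith
    nlinarith

lemma sfac_pos {R mu : ℝ} (hR : 0 < R) (hmu : 0 < mu) {n k : ℕ} (hn : 2 ≤ n) (hk : k + 1 ≤ n) :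
    0 < ((k : ℝ) + alph R mu n k) / alph R mu n k := by
  have h := alph_pos hR hmu hn hk
  have hk0 : (0:ℝ) ≤ (k:ℝ) := Nat.cast_nonneg k
  positivity

lemma bb_pos {R mu : ℝ} (hR : 0 < R) (hmu : 0 < mu) {n j : ℕ} (hn : 2 ≤ n) (hj : j ≤ n) :
    0 < bb R mu n j := by
  unfold bb
  apply Finset.prod_pos
  intro k hk
  simp only [Finset.mem_range] at hk
  exact sfac_pos hR hmu hn (by omega)

lemma bb_succ (R mu : ℝ) (n j : ℕ) :
    bb R mu n (j+1) = bb R mu n j * (((j:ℝ) + alph R mu n j) / alph R mu n j) := by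
  unfold bb; rw [Finset.prod_range_succ]

lemma sfac_lt {R mu : ℝ} (hR : 0 < R) (hmu : 0 < mu) {n i : ℕ} (hn : 2 ≤ n) (hi : i + 2 ≤ n) :
    ((i : ℝ) + alph R mu n i) / alph R mu n i
      < (((i+1:ℕ):ℝ) + alph R mu n (i+1)) / alph R mu n (i+1) := by
  have hα : 0 < alph R mu n i := alph_pos hR hmu hn (by omega)
  have hβ : 0 < alph R mu n (i+1) := alph_pos hR hmu hn (by omega)
  rw [div_lt_div_iff₀ hα hβ]
  unfold alph
  have hn : (i:ℝ) + 2 ≤ (n:ℝ) := by exact_mod_cast hi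
  push_cast
  nlinarith [mul_pos hR hmu, sq_nonneg R, Nat.cast_nonneg (α := ℝ) i]

lemma bb_logconvex {R mu : ℝ} (hR : 0 < R) (hmu : 0 < mu) {n i : ℕ} (hn : 2 ≤ n) (hi : i + 2 ≤ n) :
    bb R mu n (i+1) ^ 2 < bb R mu n i * bb R mu n (i+2) := by
  have hb : 0 < bb R mu n i := bb_pos hR hmu hn (by omega)
  have hs : 0 < ((i : ℝ) + alph R mu n i) / alph R mu n i := sfac_pos hR hmu hn (by omega)
  have hlt := sfac_lt hR hmu hn hi
  rw [bb_succ, bb_succ, bb_succ]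
  have h2 : 0 < bb R mu n i ^ 2 * (((i : ℝ) + alph R mu n i) / alph R mu n i) := by positivity
  nlinarith [mul_lt_mul_of_pos_left hlt h2]

lemma key_ineq {R mu : ℝ} (hR : 0 < R) (hmu : 0 < mu) {n i : ℕ} (hn : 2 ≤ n) (hi : i + 2 ≤ n) :
    (coefa R mu n (i+1) * (((i:ℝ)+1) * ((n:ℝ)-1-(i:ℝ))))^2
      < (coefa R mu n (i+2) * (((i:ℝ)+2) * ((i:ℝ)+1)))
        * (coefa R mu n i * (((n:ℝ)-(i:ℝ)) * ((n:ℝ)-1-(i:ℝ)))) := by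
  set K : ℝ := ((i:ℝ)+1) * ((n:ℝ)-1-(i:ℝ)) * (n.choose (i+1) : ℝ) with hKdef
  have hni : (i:ℝ) + 2 ≤ (n:ℝ) := by exact_mod_cast hi
  have hc1 := Nat.choose_succ_right_eq n (i+1)
  have hc0 := Nat.choose_succ_right_eq n i
  have h1 : ((n.choose (i+2) : ℝ)) * ((i:ℝ)+2) = (n.choose (i+1) : ℝ) * ((n:ℝ) - ((i:ℝ)+1)) := by
    have hcast : ((n - (i+1) : ℕ) : ℝ) = (n:ℝ) - ((i:ℝ)+1) := by
      rw [Nat.cast_sub (by omega)]; push_cast; ring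
    have := congrArg (Nat.cast : ℕ → ℝ) hc1
    push_cast at this
    rw [hcast] at this
    convert this using 2 <;> push_cast <;> ring
  have h0 : ((n.choose (i+1) : ℝ)) * ((i:ℝ)+1) = (n.choose i : ℝ) * ((n:ℝ) - (i:ℝ)) := by
    have hcast : ((n - i : ℕ) : ℝ) = (n:ℝ) - (i:ℝ) := by
      rw [Nat.cast_sub (by omega)]
    have := congrArg (Nat.cast : ℕ → ℝ) hc0
    push_cast at this
    rw [hcast] at this
    convert this using 2 <;> push_cast <;> ring
  have hK1 : ((i:ℝ)+2) * ((i:ℝ)+1) * (n.choose (i+2) : ℝ) = K := by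
    rw [hKdef]; linear_combination ((i:ℝ)+1) * h1
  have hK2 : ((n:ℝ)-(i:ℝ)) * ((n:ℝ)-1-(i:ℝ)) * (n.choose i : ℝ) = K := by
    rw [hKdef]; linear_combination (-((n:ℝ)-1-(i:ℝ))) * h0
  have hKpos : 0 < K := by
    rw [hKdef]
    have hch : 0 < (n.choose (i+1) : ℝ) := by
      exact_mod_cast Nat.choose_pos (by omega : i + 1 ≤ n)
    have h2 : (0:ℝ) < (n:ℝ)-1-(i:ℝ) := by linarith
    have h3 : (0:ℝ) < ((i:ℝ)+1) := by positivity
    exact mul_pos (mul_pos h3 h2) hch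
  have e1 : coefa R mu n (i+2) * (((i:ℝ)+2) * ((i:ℝ)+1)) = K * bb R mu n (i+2) := by
    rw [coefa_eq]; linear_combination (bb R mu n (i+2)) * hK1
  have e2 : coefa R mu n i * (((n:ℝ)-(i:ℝ)) * ((n:ℝ)-1-(i:ℝ))) = K * bb R mu n i := by
    rw [coefa_eq]; linear_combination (bb R mu n i) * hK2
  have e3 : coefa R mu n (i+1) * (((i:ℝ)+1) * ((n:ℝ)-1-(i:ℝ))) = K * bb R mu n (i+1) := by
    rw [coefa_eq, hKdef]; ring
  rw [e1, e2, e3]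
  have hb := bb_logconvex hR hmu hn hi
  nlinarith [mul_lt_mul_of_pos_left hb (mul_pos hKpos hKpos)]

lemma coefa_pos {R mu : ℝ} (hR : 0 < R) (hmu : 0 < mu) {n j : ℕ} (hn : 2 ≤ n) (hj : j ≤ n) :
    0 < coefa R mu n j := by
  rw [coefa_eq]
  have hch : 0 < (n.choose j : ℝ) := by exact_mod_cast Nat.choose_pos hj
  exact mul_pos hch (bb_pos hR hmu hn hj)

lemma d1Phi_eq (R mu : ℝ) (n : ℕ) (X : ℝ × ℝ) :
    d1Phi R mu n X
      = ∑ j ∈ Finset.range (n + 1),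
          coefa R mu n j * ((j:ℝ) * X.1 ^ (j - 1)) * X.2 ^ (n - j) := by
  unfold d1Phi Phi
  apply HasDerivAt.deriv
  apply HasDerivAt.fun_sum
  intro j _
  exact ((hasDerivAt_pow j X.1).const_mul (coefa R mu n j)).mul_const (X.2 ^ (n - j))

lemma d2Phi_eq (R mu : ℝ) (n : ℕ) (X : ℝ × ℝ) :
    d2Phi R mu n X
      = ∑ j ∈ Finset.range (n + 1),
          coefa R mu n j * X.1 ^ j * (((n - j : ℕ):ℝ) * X.2 ^ (n - j - 1)) := by
  unfold d2Phi Phi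
  apply HasDerivAt.deriv
  apply HasDerivAt.fun_sum
  intro j _
  exact (hasDerivAt_pow (n - j) X.2).const_mul (coefa R mu n j * X.1 ^ j)

lemma d11Phi_eq (R mu : ℝ) (n : ℕ) (X : ℝ × ℝ) :
    d11Phi R mu n X
      = ∑ j ∈ Finset.range (n + 1),
          coefa R mu n j * ((j:ℝ) * (((j - 1 : ℕ):ℝ) * X.1 ^ (j - 1 - 1))) * X.2 ^ (n - j) := by
  unfold d11Phi
  have h : (fun t => d1Phi R mu n (t, X.2))
      = fun t => ∑ j ∈ Finset.range (n + 1),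
          coefa R mu n j * ((j:ℝ) * t ^ (j - 1)) * X.2 ^ (n - j) := by
    funext t; exact d1Phi_eq R mu n (t, X.2)
  rw [h]
  apply HasDerivAt.deriv
  apply HasDerivAt.fun_sum
  intro j _
  exact (((hasDerivAt_pow (j-1) X.1).const_mul ((j:ℝ))).const_mul
    (coefa R mu n j)).mul_const (X.2 ^ (n - j))

lemma d12Phi_eq (R mu : ℝ) (n : ℕ) (X : ℝ × ℝ) :
    d12Phi R mu n X
      = ∑ j ∈ Finset.range (n + 1),
          coefa R mu n j * ((j:ℝ) * X.1 ^ (j - 1)) * (((n - j : ℕ):ℝ) * X.2 ^ (n - j - 1)) := by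
  unfold d12Phi
  have h : (fun t => d2Phi R mu n (t, X.2))
      = fun t => ∑ j ∈ Finset.range (n + 1),
          coefa R mu n j * t ^ j * (((n - j : ℕ):ℝ) * X.2 ^ (n - j - 1)) := by
    funext t; exact d2Phi_eq R mu n (t, X.2)
  rw [h]
  apply HasDerivAt.deriv
  apply HasDerivAt.fun_sum
  intro j _
  exact ((hasDerivAt_pow j X.1).const_mul (coefa R mu n j)).mul_const
    (((n - j : ℕ):ℝ) * X.2 ^ (n - j - 1))

lemma d22Phi_eq (R mu : ℝ) (n : ℕ) (X : ℝ × ℝ) :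
    d22Phi R mu n X
      = ∑ j ∈ Finset.range (n + 1),
          coefa R mu n j * X.1 ^ j
            * (((n - j : ℕ):ℝ) * (((n - j - 1 : ℕ):ℝ) * X.2 ^ (n - j - 1 - 1))) := by
  unfold d22Phi
  have h : (fun t => d2Phi R mu n (X.1, t))
      = fun t => ∑ j ∈ Finset.range (n + 1),
          coefa R mu n j * X.1 ^ j * (((n - j : ℕ):ℝ) * t ^ (n - j - 1)) := by
    funext t; exact d2Phi_eq R mu n (X.1, t)
  rw [h]
  apply HasDerivAt.deriv
  apply HasDerivAt.fun_sum
  intro j _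
  exact ((hasDerivAt_pow (n - j - 1) X.2).const_mul (((n - j:ℕ):ℝ))).const_mul
    (coefa R mu n j * X.1 ^ j)

lemma d11_form (R mu : ℝ) (m : ℕ) (X : ℝ × ℝ) :
    d11Phi R mu (m+2) X
      = ∑ i ∈ Finset.range (m + 1),
          (coefa R mu (m+2) (i+2) * (((i:ℝ)+2)*((i:ℝ)+1))) * (X.1 ^ i * X.2 ^ (m - i)) := by
  rw [d11Phi_eq]
  rw [show m+2+1 = m+1+1+1 from rfl]
  rw [Finset.sum_range_succ', Finset.sum_range_succ']
  simp only [Nat.cast_zero, zero_mul, mul_zero, add_zero, Nat.cast_one, Nat.sub_self,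
    Nat.cast_ofNat, one_mul]
  norm_num
  apply Finset.sum_congr rfl
  intro i hi
  have e3 : m + 2 - (i + 1 + 1) = m - i := by omega
  rw [show i + 1 + 1 = i + 2 from rfl] at e3 ⊢
  rw [e3]
  push_cast
  ring

lemma d12_form (R mu : ℝ) (m : ℕ) (X : ℝ × ℝ) :
    d12Phi R mu (m+2) X
      = ∑ i ∈ Finset.range (m + 1),
          (coefa R mu (m+2) (i+1) * (((i:ℝ)+1)*((m:ℝ)+1-(i:ℝ)))) * (X.1 ^ i * X.2 ^ (m - i)) := by
  rw [d12Phi_eq]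
  rw [show m+2+1 = m+1+1+1 from rfl]
  rw [Finset.sum_range_succ']
  rw [Finset.sum_range_succ]
  simp only [Nat.cast_zero, zero_mul, mul_zero, add_zero, Nat.sub_self]
  norm_num
  apply Finset.sum_congr rfl
  intro i hi
  simp only [Finset.mem_range] at hi
  have e2 : m + 2 - (i + 1) = m + 1 - i := by omega
  have e3 : m + 2 - (i + 1) - 1 = m - i := by omega
  rw [e3, e2]
  have e4 : ((m + 1 - i : ℕ) : ℝ) = (m:ℝ) + 1 - (i:ℝ) := by
    rw [Nat.cast_sub (by omega)]; push_cast; ring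
  rw [e4]
  push_cast
  ring

lemma d22_form (R mu : ℝ) (m : ℕ) (X : ℝ × ℝ) :
    d22Phi R mu (m+2) X
      = ∑ i ∈ Finset.range (m + 1),
          (coefa R mu (m+2) i * (((m:ℝ)+2-(i:ℝ))*((m:ℝ)+1-(i:ℝ)))) * (X.1 ^ i * X.2 ^ (m - i)) := by
  rw [d22Phi_eq]
  rw [show m+2+1 = m+1+1+1 from rfl]
  rw [Finset.sum_range_succ]
  rw [Finset.sum_range_succ]
  simp only [Nat.sub_self, Nat.cast_zero, zero_mul, mul_zero, add_zero]
  norm_num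
  apply Finset.sum_congr rfl
  intro i hi
  simp only [Finset.mem_range] at hi
  have e2 : m + 2 - i = m + 2 - i := rfl
  have e3 : m + 2 - i - 1 = m + 1 - i := by omega
  have e4 : m + 1 - i - 1 = m - i := by omega
  rw [e3, e4]
  have c1 : ((m + 2 - i : ℕ) : ℝ) = (m:ℝ) + 2 - (i:ℝ) := by
    rw [Nat.cast_sub (by omega)]; push_cast; ring
  have c2 : ((m + 1 - i : ℕ) : ℝ) = (m:ℝ) + 1 - (i:ℝ) := by
    rw [Nat.cast_sub (by omega)]; push_cast; ring
  rw [c1, c2]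
  ring

lemma quad_nonneg (p q r a b : ℝ) (hp : 0 < p) (hq : q^2 < p*r) :
    0 ≤ p*a^2 + 2*q*(a*b) + r*b^2 := by
  nlinarith [sq_nonneg (p*a + q*b), mul_nonneg (by nlinarith : (0:ℝ) ≤ p*r - q^2) (sq_nonneg b)]

lemma quad_pos (p q r a b : ℝ) (hp : 0 < p) (hq : q^2 < p*r) (hab : a ≠ 0 ∨ b ≠ 0) :
    0 < p*a^2 + 2*q*(a*b) + r*b^2 := by
  by_cases hb : b = 0
  · subst hb
    have ha : a ≠ 0 := by tauto
    have : 0 < a^2 := lt_of_le_of_ne (sq_nonneg a) (Ne.symm (pow_ne_zero 2 ha))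
    nlinarith
  · have hb2 : 0 < b^2 := lt_of_le_of_ne (sq_nonneg b) (Ne.symm (pow_ne_zero 2 hb))
    nlinarith [sq_nonneg (p*a + q*b), mul_pos (by nlinarith : (0:ℝ) < p*r - q^2) hb2]

lemma key_ineq' {R mu : ℝ} (hR : 0 < R) (hmu : 0 < mu) (m i : ℕ) (hi : i ≤ m) :
    (coefa R mu (m+2) (i+1) * (((i:ℝ)+1)*((m:ℝ)+1-(i:ℝ))))^2
      < (coefa R mu (m+2) (i+2) * (((i:ℝ)+2)*((i:ℝ)+1)))
        * (coefa R mu (m+2) i * (((m:ℝ)+2-(i:ℝ))*((m:ℝ)+1-(i:ℝ)))) := by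
  have h := key_ineq hR hmu (n := m+2) (i := i) (by omega) (by omega)
  push_cast at h
  nlinarith [h]

theorem stmt8 (R mu : ℝ) (hR : 0 < R) (hmu : 0 < mu) (n : ℕ) (hn : 2 ≤ n)
    (X : ℝ × ℝ) (hX1 : 0 ≤ X.1) (hX2 : 0 ≤ X.2) (hX : X ≠ (0, 0)) :
    (hessPhi R mu n X).IsSymm ∧
    ∀ ξ : Fin 2 → ℝ, ξ ≠ 0 → 0 < dotProduct ((hessPhi R mu n X).mulVec ξ) ξ := by
  obtain ⟨m, rfl⟩ : ∃ m, n = m + 2 := ⟨n - 2, by omega⟩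
  constructor
  · unfold Matrix.IsSymm
    ext i j
    fin_cases i <;> fin_cases j <;> simp [hessPhi]
  · intro ξ hξ
    have hξ' : ξ 0 ≠ 0 ∨ ξ 1 ≠ 0 := by
      by_contra hc
      push_neg at hc
      exact hξ (funext fun j => by fin_cases j <;> simp [hc.1, hc.2])
    have h1 : dotProduct ((hessPhi R mu (m+2) X).mulVec ξ) ξ
        = d11Phi R mu (m+2) X * (ξ 0)^2 + d12Phi R mu (m+2) X * (2*(ξ 0 * ξ 1))
          + d22Phi R mu (m+2) X * (ξ 1)^2 := by
      simp [hessPhi, Matrix.mulVec, dotProduct, Fin.sum_univ_two]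
      ring
    rw [h1, d11_form, d12_form, d22_form]
    rw [Finset.sum_mul, Finset.sum_mul, Finset.sum_mul, ← Finset.sum_add_distrib,
      ← Finset.sum_add_distrib]
    have hform : ∀ i ∈ Finset.range (m+1),
        coefa R mu (m+2) (i+2) * (((i:ℝ)+2)*((i:ℝ)+1)) * (X.1 ^ i * X.2 ^ (m - i)) * (ξ 0)^2
          + coefa R mu (m+2) (i+1) * (((i:ℝ)+1)*((m:ℝ)+1-(i:ℝ))) * (X.1 ^ i * X.2 ^ (m - i))
              * (2*(ξ 0 * ξ 1))
          + coefa R mu (m+2) i * (((m:ℝ)+2-(i:ℝ))*((m:ℝ)+1-(i:ℝ))) * (X.1 ^ i * X.2 ^ (m - i))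
              * (ξ 1)^2
        = (X.1 ^ i * X.2 ^ (m - i)) *
            ((coefa R mu (m+2) (i+2) * (((i:ℝ)+2)*((i:ℝ)+1))) * (ξ 0)^2
              + 2*(coefa R mu (m+2) (i+1) * (((i:ℝ)+1)*((m:ℝ)+1-(i:ℝ)))) * (ξ 0 * ξ 1)
              + (coefa R mu (m+2) i * (((m:ℝ)+2-(i:ℝ))*((m:ℝ)+1-(i:ℝ)))) * (ξ 1)^2) := by
      intro i _
      ring
    rw [Finset.sum_congr rfl hform]
    have hp : ∀ i : ℕ, i ≤ m → 0 < coefa R mu (m+2) (i+2) * (((i:ℝ)+2)*((i:ℝ)+1)) := by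
      intro i hi
      have := coefa_pos hR hmu (n := m+2) (j := i+2) (by omega) (by omega)
      positivity
    have hquadpos : ∀ i : ℕ, i ≤ m →
        0 < (coefa R mu (m+2) (i+2) * (((i:ℝ)+2)*((i:ℝ)+1))) * (ξ 0)^2
              + 2*(coefa R mu (m+2) (i+1) * (((i:ℝ)+1)*((m:ℝ)+1-(i:ℝ)))) * (ξ 0 * ξ 1)
              + (coefa R mu (m+2) i * (((m:ℝ)+2-(i:ℝ))*((m:ℝ)+1-(i:ℝ)))) * (ξ 1)^2 := by
      intro i hi
      exact quad_pos _ _ _ _ _ (hp i hi) (key_ineq' hR hmu m i hi) hξ'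
    apply Finset.sum_pos'
    · intro i hi
      simp only [Finset.mem_range] at hi
      apply mul_nonneg
      · exact mul_nonneg (pow_nonneg hX1 i) (pow_nonneg hX2 (m - i))
      · exact le_of_lt (hquadpos i (by omega))
    · by_cases hx : X.1 = 0
      · refine ⟨0, by simp, ?_⟩
        have hy : 0 < X.2 := by
          rcases lt_or_eq_of_le hX2 with h | h
          · exact h
          · exfalso; apply hX; ext
            · exact hx
            · exact h.symm
        apply mul_pos
        · simpa using pow_pos hy m
        · exact hquadpos 0 (by omega)
      · refine ⟨m, Finset.self_mem_range_succ m, ?_⟩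
        have hx' : 0 < X.1 := lt_of_le_of_ne hX1 (Ne.symm hx)
        apply mul_pos
        · rw [Nat.sub_self]; simpa using pow_pos hx' m
        · exact hquadpos m le_rfl
end

section
/- For R > 0, μ > 0, n ≥ 2, the coefficients satisfy a_{j,n} ≤ ((1+R)/R)^j · binom(n,j) for 1 ≤ j ≤ n, and consequently Φ_n(X) ≤ R^{-n} ((1+R)X₁ + R X₂)^n for all X ∈ [0,∞)². -/
open Matrix Finset

/-! Each factor `(k + α_{k,n}) / α_{k,n}` of `a_{j,n}` is at most `(1 + R) / R`, because
`α_{k,n} ≥ R k` for `k < n`. Hence `a_{j,n} ≤ ((1 + R) / R)^j binom(n,j)`, and summing against the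
monomials `X₁^j X₂^{n-j}` gives the binomial expansion of `((1 + R) / R · X₁ + X₂)^n`. -/

theorem sum_mul_pow_mul_pow_le_add_pow {x y c : ℝ} (hx : 0 ≤ x) (hy : 0 ≤ y) {n : ℕ} {a : ℕ → ℝ}
    (ha : ∀ j ≤ n, a j ≤ c ^ j * n.choose j) :
    ∑ j ∈ range (n + 1), a j * x ^ j * y ^ (n - j) ≤ (c * x + y) ^ n := by
  rw [add_pow]
  refine sum_le_sum fun j hj => ?_
  have hxy : 0 ≤ x ^ j * y ^ (n - j) := by positivity
  calc a j * x ^ j * y ^ (n - j) = a j * (x ^ j * y ^ (n - j)) := by ring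
    _ ≤ c ^ j * n.choose j * (x ^ j * y ^ (n - j)) :=
        mul_le_mul_of_nonneg_right (ha j (Nat.lt_succ_iff.mp (mem_range.mp hj))) hxy
    _ = (c * x) ^ j * y ^ (n - j) * n.choose j := by ring

section Coefficients

variable {R mu : ℝ} {n k : ℕ}

theorem mul_le_alph (hmu : 0 ≤ mu) (hR : 0 ≤ R) (hk : k < n) : R * k ≤ alph R mu n k := by
  have hk' : (k : ℝ) + 1 ≤ n := by exact_mod_cast hk
  have : 0 ≤ R * (mu * ((n : ℝ) - k - 1)) := mul_nonneg hR (mul_nonneg hmu (by linarith))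
  unfold alph
  linarith

theorem alph_nonneg (hmu : 0 ≤ mu) (hR : 0 ≤ R) (hk : k < n) : 0 ≤ alph R mu n k :=
  (mul_nonneg hR k.cast_nonneg).trans (mul_le_alph hmu hR hk)

theorem div_alph_nonneg (hmu : 0 ≤ mu) (hR : 0 ≤ R) (hk : k < n) :
    0 ≤ ((k : ℝ) + alph R mu n k) / alph R mu n k :=
  have hα := alph_nonneg hmu hR hk
  div_nonneg (add_nonneg k.cast_nonneg hα) hα

theorem div_alph_le (hmu : 0 ≤ mu) (hR : 0 < R) (hk : k < n) :
    ((k : ℝ) + alph R mu n k) / alph R mu n k ≤ (1 + R) / R := by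
  rcases (alph_nonneg hmu hR.le hk).eq_or_lt with h0 | hpos
  · -- `α_{k,n} = 0` only for `k = 0`, `n = 1`, where the factor is the junk value `0 / 0 = 0`
    rw [← h0, div_zero]
    positivity
  · rw [div_le_div_iff₀ hpos hR]
    nlinarith [mul_le_alph hmu hR.le hk]

theorem coefa_le (hmu : 0 ≤ mu) (hR : 0 < R) {j : ℕ} (hj : j ≤ n) :
    coefa R mu n j ≤ ((1 + R) / R) ^ j * n.choose j := by
  have hfactor : ∀ k ∈ range j, k < n := fun k hk => (mem_range.mp hk).trans_le hj
  have hprod : ∏ k ∈ range j, ((k : ℝ) + alph R mu n k) / alph R mu n k ≤ ((1 + R) / R) ^ j := by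
    calc _ ≤ ∏ _k ∈ range j, (1 + R) / R :=
          prod_le_prod (fun k hk => div_alph_nonneg hmu hR.le (hfactor k hk))
            (fun k hk => div_alph_le hmu hR (hfactor k hk))
      _ = ((1 + R) / R) ^ j := by rw [prod_const, card_range]
  rw [coefa, mul_comm]
  exact mul_le_mul_of_nonneg_right hprod (n.choose j).cast_nonneg

end Coefficients

theorem stmt12_general (R mu : ℝ) (hR : 0 < R) (hmu : 0 < mu) (n : ℕ) :
    (∀ j : ℕ, 1 ≤ j → j ≤ n →
      coefa R mu n j ≤ ((1 + R) / R) ^ j * (n.choose j : ℝ)) ∧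
    (∀ X : ℝ × ℝ, 0 ≤ X.1 → 0 ≤ X.2 →
      Phi R mu n X ≤ ((1 + R) * X.1 + R * X.2) ^ n / R ^ n) := by
  refine ⟨fun j _ hj => coefa_le hmu.le hR hj, fun X hX₁ hX₂ => ?_⟩
  calc Phi R mu n X ≤ ((1 + R) / R * X.1 + X.2) ^ n :=
        sum_mul_pow_mul_pow_le_add_pow hX₁ hX₂ fun j hj => coefa_le hmu.le hR hj
    _ = ((1 + R) * X.1 + R * X.2) ^ n / R ^ n := by
        rw [← div_pow]
        field_simp

theorem stmt12 (R mu : ℝ) (hR : 0 < R) (hmu : 0 < mu) (n : ℕ) (hn : 2 ≤ n) :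
    (∀ j : ℕ, 1 ≤ j → j ≤ n →
      coefa R mu n j ≤ ((1 + R) / R) ^ j * (n.choose j : ℝ)) ∧
    (∀ X : ℝ × ℝ, 0 ≤ X.1 → 0 ≤ X.2 →
      Phi R mu n X ≤ ((1 + R) * X.1 + R * X.2) ^ n / R ^ n) :=
  stmt12_general R mu hR hmu n
end
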